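/- Let G be a tree (connected acyclic simple graph) on a finite vertex set V and let B be a complex matrix indexed by V × Fin 3 that is G-invertible. If ν : V × Fin 3 → ℂ satisfies B.mulVec ν = 0 and there exists a vertex j ∈ V with ν (j,a) = 0 for all a ∈ Fin 3, then ν = 0. (This is the key kernel-support lemma established inside the proof of Theorem 2: a G-invertible matrix over a tree admits no nonzero kernel vector whose support misses some bus.) -/

import Mathlib

open Matrix
open scoped ComplexOrder

/-- The `(i,j)` block of a matrix indexed by `V × Fin 3`:
the 3×3 matrix `(a,b) ↦ X (i,a) (j,b)`. -/
def blockOf {V : Type*} (X : Matrix (V × Fin 3) (V × Fin 3) ℂ) (i j : V) :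
    Matrix (Fin 3) (Fin 3) ℂ :=
  Matrix.of fun a b => X (i, a) (j, b)

/-- `X` is `G`-invertible: `X` is positive semidefinite, its blocks on edges of
`G` are invertible, and its blocks on non-adjacent pairs of distinct vertices
vanish. -/
def GInvertible {V : Type*} [Fintype V] [DecidableEq V] (G : SimpleGraph V)
    (X : Matrix (V × Fin 3) (V × Fin 3) ℂ) : Prop :=
  X.PosSemidef ∧
  (∀ i j : V, G.Adj i j → IsUnit (blockOf X i j)) ∧
  (∀ i j : V, i ≠ j → ¬ G.Adj i j → blockOf X i j = 0)

/-!
Let `ν` be a kernel vector of `B` vanishing on the bus `v`, and let `i` be a neighbour of `v`.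
As `vi` is a bridge of the tree, the set `C` of vertices reachable from `i` without it is left
only by the edge `vi`. The restriction `μ` of `ν` to `C` has `(B μ)_k = (B ν)_k = 0` for every
`k ∈ C`, since `ν` vanishes on `v` and `B` has zero blocks on non-edges; so `μ* B μ = 0`, and
positive semidefiniteness gives `B μ = 0`. The rows of bus `v` then read `B_{vi} ν_i = 0`, and
the invertible block `B_{vi}` forces `ν_i = 0`. Vanishing spreads along edges, hence over the
connected tree.
-/

namespace SimpleGraph

variable {V : Type*} {G : SimpleGraph V}

theorem IsAcyclic.exists_set_with_unique_leaving_edge (hG : G.IsAcyclic) {v i : V}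
    (hvi : G.Adj v i) :
    ∃ C : Set V, i ∈ C ∧ v ∉ C ∧ ∀ k ∈ C, ∀ l, G.Adj k l → l ∈ C ∨ (k = i ∧ l = v) := by
  let H := G.deleteEdges {s(v, i)}
  refine ⟨{k | H.Reachable i k}, Reachable.refl i, fun hv => ?_, fun k hk l hkl => ?_⟩
  · exact isBridge_iff.mp (isAcyclic_iff_forall_adj_isBridge.mp hG hvi) hv.symm
  · by_cases he : s(k, l) = s(v, i)
    · rcases Sym2.eq_iff.mp he with ⟨-, rfl⟩ | hki
      · exact .inl (Reachable.refl l)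
      · exact .inr hki
    · exact .inl (hk.trans (deleteEdges_adj.mpr ⟨hkl, he⟩).reachable)

end SimpleGraph

namespace Matrix

variable {n 𝕜 : Type*} [Fintype n] [RCLike 𝕜]

theorem PosSemidef.mulVec_eq_zero_of_forall_eq_zero_or {A : Matrix n n 𝕜} (hA : A.PosSemidef)
    {x : n → 𝕜} (hx : ∀ k, x k = 0 ∨ (A *ᵥ x) k = 0) : A *ᵥ x = 0 := by
  refine (hA.dotProduct_mulVec_zero_iff x).mp (Finset.sum_eq_zero fun k _ => ?_)
  rcases hx k with h | h <;> simp [h]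

end Matrix

namespace GInvertible

variable {V : Type*} [Fintype V] [DecidableEq V] {G : SimpleGraph V}
  {B : Matrix (V × Fin 3) (V × Fin 3) ℂ} {ν : V × Fin 3 → ℂ}

theorem apply_eq_zero (hB : GInvertible G B) {i j : V} (hne : i ≠ j) (hadj : ¬ G.Adj i j)
    (a b : Fin 3) : B (i, a) (j, b) = 0 :=
  congrFun₂ (hB.2.2 i j hne hadj) a b

theorem eq_zero_of_unique_leaving_edge (hB : GInvertible G B) (hker : B *ᵥ ν = 0) {v i : V}
    (hvi : G.Adj v i) {C : Set V} (hiC : i ∈ C) (hvC : v ∉ C)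
    (hC : ∀ k ∈ C, ∀ l, G.Adj k l → l ∈ C ∨ (k = i ∧ l = v)) (hv : ∀ a, ν (v, a) = 0) :
    ∀ a, ν (i, a) = 0 := by
  classical
  set μ : V × Fin 3 → ℂ := fun p => if p.1 ∈ C then ν p else 0
  have hμ : B *ᵥ μ = 0 := by
    refine hB.1.mulVec_eq_zero_of_forall_eq_zero_or fun k => ?_
    by_cases hk : k.1 ∈ C
    · refine .inr ((Finset.sum_congr rfl fun l _ => ?_).trans (congrFun hker k))
      by_cases hl : l.1 ∈ C
      · simp [μ, hl]
      by_cases hlv : l.1 = v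
      · obtain ⟨x, b⟩ := l
        subst hlv
        simp [μ, hv]
      · have hnadj : ¬ G.Adj k.1 l.1 := fun h => (hC _ hk _ h).elim hl (hlv ·.2)
        have hBkl : B k l = 0 := hB.apply_eq_zero (ne_of_mem_of_not_mem hk hl) hnadj k.2 l.2
        simp [hBkl]
    · exact .inl (if_neg hk)
  have hblock : blockOf B v i *ᵥ (fun b => ν (i, b)) = 0 := by
    funext a
    refine Eq.trans ?_ (congrFun hμ (v, a))
    simp only [mulVec, dotProduct, Fintype.sum_prod_type]
    rw [Finset.sum_eq_single_of_mem i (Finset.mem_univ _)]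
    · simp [μ, hiC, blockOf]
    · intro x _ hxi
      refine Finset.sum_eq_zero fun b _ => ?_
      by_cases hxC : x ∈ C
      · have hnadj : ¬ G.Adj v x := fun h => (hC _ hxC _ h.symm).elim hvC (hxi ·.1)
        rw [hB.apply_eq_zero (ne_of_mem_of_not_mem hxC hvC).symm hnadj, zero_mul]
      · simp [μ, hxC]
  have hinj := mulVec_injective_iff_isUnit.mpr (hB.2.1 v i hvi)
  exact congrFun (hinj (hblock.trans (mulVec_zero _).symm))

theorem eq_zero_of_adj (hB : GInvertible G B) (hG : G.IsAcyclic) (hker : B *ᵥ ν = 0) {v i : V}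
    (hvi : G.Adj v i) (hv : ∀ a, ν (v, a) = 0) : ∀ a, ν (i, a) = 0 :=
  have ⟨_, hiC, hvC, hC⟩ := hG.exists_set_with_unique_leaving_edge hvi
  hB.eq_zero_of_unique_leaving_edge hker hvi hiC hvC hC hv

theorem eq_zero_of_reachable (hB : GInvertible G B) (hG : G.IsAcyclic) (hker : B *ᵥ ν = 0)
    {u w : V} (huw : G.Reachable u w) (hu : ∀ a, ν (u, a) = 0) : ∀ a, ν (w, a) = 0 := by
  obtain ⟨p⟩ := huw
  induction p with
  | nil => exact hu
  | cons hadj _ ih => exact ih (hB.eq_zero_of_adj hG hker hadj hu)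

end GInvertible

/-- **Kernel-support lemma (from the proof of Theorem 2).** A `G`-invertible
matrix over a tree admits no nonzero kernel vector whose support misses some
bus: if `B.mulVec ν = 0` and `ν` vanishes on all three phases of some vertex
`j`, then `ν = 0`. -/
theorem g_invertible_tree_kernel_vector_vanishing_at_a_bus_is_zero
    {V : Type*} [Fintype V] [DecidableEq V]
    (G : SimpleGraph V) (hG : G.IsTree)
    (B : Matrix (V × Fin 3) (V × Fin 3) ℂ) (hB : GInvertible G B)
    (ν : V × Fin 3 → ℂ) (hker : B.mulVec ν = 0)
    (hmiss : ∃ j : V, ∀ a : Fin 3, ν (j, a) = 0) :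
    ν = 0 := by
  obtain ⟨j, hj⟩ := hmiss
  funext ⟨u, a⟩
  exact hB.eq_zero_of_reachable hG.isAcyclic hker (hG.connected.preconnected j u) hj a
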